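/- arXiv:2006.03357 — 2 statements merged into one kernel-verified Lean document; each statement's English description precedes it below -/
import Mathlib

section
/- Cumulative information gain is bounded by prior entropy: Under Mentee's setup with w(μ) > 0, w(π^h) > 0 and a finite-entropy prior w, for every m ∈ ℕ and every offset i ∈ {0, …, m−1}, the expected total information gain over the disjoint blocks of length m starting at times t ∈ mℕ + i, under the measure in which exploit-step actions follow π*, explore-step actions follow the mixture π̄, and percepts follow the mixture ξ, satisfies ∑_{t ∈ mℕ+i} E[ IG(h_{t:t+m−1} | h_{<t}) ] ≤ Ent(w), where Ent(w) is the entropy of the prior w over environment–policy pairs. -/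
open MeasureTheory Filter Topology ENNReal
open scoped Classical

namespace Mentee

/-- Interactions: an exploration flag (true iff the mentor chose the action), an action,
an observation, and a reward. -/
abbrev MInter (A O R : Type) := Bool × A × O × R
/-- Finite interaction histories. -/
abbrev MHist (A O R : Type) := List (MInter A O R)
/-- Infinite interaction histories. -/
abbrev MInf (A O R : Type) := ℕ → MInter A O R
/-- A (stochastic) policy, as a nonnegative kernel over actions. -/
abbrev MPolicy (A O R : Type) := MHist A O R → A → ℝ≥0∞
/-- An environment, as a nonnegative kernel over percepts. -/
abbrev MEnv (A O R : Type) := MHist A O R → A → O × R → ℝ≥0∞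

variable {A O R ι κ : Type}

/-- `π` is a genuine probability distribution over actions at each history. -/
def IsMPolicy (π : MPolicy A O R) : Prop := ∀ h, ∑' a : A, π h a = 1

/-- `ν` is a genuine probability distribution over percepts at each history-action pair. -/
def IsMEnv (ν : MEnv A O R) : Prop := ∀ h a, ∑' p : O × R, ν h a p = 1

/-- Likelihood of the percepts in `h` according to the environment `ν`. -/
noncomputable def envLik (ν : MEnv A O R) (h : MHist A O R) : ℝ≥0∞ :=
  ∏ k : Fin h.length, ν (h.take k.1) (h.get k).2.1 (h.get k).2.2

/-- Likelihood of the mentor-chosen actions in `h` according to the policy `π`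
(only timesteps with `e_k = 1` contribute). -/
noncomputable def polLik (π : MPolicy A O R) (h : MHist A O R) : ℝ≥0∞ :=
  ∏ k : Fin h.length, if (h.get k).1 = true then π (h.take k.1) (h.get k).2.1 else 1

/-- Posterior weight of the environment `νs i`:
`w(ν | h) ∝ w(ν) ∏_{k<t} ν(o_k r_k | h_{<k} a_k)`. -/
noncomputable def postE (wE : ι → ℝ≥0∞) (νs : ι → MEnv A O R)
    (h : MHist A O R) (i : ι) : ℝ≥0∞ :=
  wE i * envLik (νs i) h / ∑' i' : ι, wE i' * envLik (νs i') h

/-- Posterior weight of the policy `πs j`: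
`w(π | h) ∝ w(π) ∏_{k<t : e_k=1} π(a_k | h_{<k})`. -/
noncomputable def postP (wP : κ → ℝ≥0∞) (πs : κ → MPolicy A O R)
    (h : MHist A O R) (j : κ) : ℝ≥0∞ :=
  wP j * polLik (πs j) h / ∑' j' : κ, wP j' * polLik (πs j') h

/-- The Bayes-mixture environment `ξ`. -/
noncomputable def xi (wE : ι → ℝ≥0∞) (νs : ι → MEnv A O R) : MEnv A O R :=
  fun h a p => ∑' i : ι, postE wE νs h i * νs i h a p

/-- The Bayes-mixture policy `π̄`. -/
noncomputable def pibar (wP : κ → ℝ≥0∞) (πs : κ → MPolicy A O R) : MPolicy A O R :=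
  fun h a => ∑' j : κ, postP wP πs h j * πs j h a

/-- Information gain of the history fragment `h'` following `h`: the KL divergence from
the posterior after `h ++ h'` to the posterior after `h`. -/
noncomputable def IG (wE : ι → ℝ≥0∞) (νs : ι → MEnv A O R)
    (wP : κ → ℝ≥0∞) (πs : κ → MPolicy A O R) (h h' : MHist A O R) : ℝ :=
  ∑' (i : ι) (j : κ),
    (postE wE νs (h ++ h') i * postP wP πs (h ++ h') j).toReal *
      Real.log ((postE wE νs (h ++ h') i * postP wP πs (h ++ h') j).toReal /
        (postE wE νs h i * postP wP πs h j).toReal)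

/-- Embed an `(a, o, r)` fragment as mentor-chosen interactions (`e = 1` throughout). -/
def toFrag (f : List (A × O × R)) : MHist A O R := f.map fun x => (true, x)

/-- Conditional probability `P^π_ν(f | h)` of the fragment `f` following the history `h`,
with actions sampled from `π` and percepts from `ν`. -/
noncomputable def fragProb (π : MPolicy A O R) (ν : MEnv A O R)
    (h f : MHist A O R) : ℝ≥0∞ :=
  ∏ k : Fin f.length,
    π (h ++ f.take k.1) (f.get k).2.1 * ν (h ++ f.take k.1) (f.get k).2.1 (f.get k).2.2

/-- The information gain value `V^{IG}_{m,0}(h)`: the expected information gain of the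
next `m` timesteps when actions are sampled from the mixture `π̄` and percepts from the
mixture `ξ`, conditioned on all of them being exploratory (`e = 1^m`). -/
noncomputable def VIG (wE : ι → ℝ≥0∞) (νs : ι → MEnv A O R)
    (wP : κ → ℝ≥0∞) (πs : κ → MPolicy A O R) (m : ℕ) (h : MHist A O R) : ℝ :=
  ∑' f : Fin m → A × O × R,
    (fragProb (pibar wP πs) (xi wE νs) h (toFrag (List.ofFn f))).toReal *
      IG wE νs wP πs h (toFrag (List.ofFn f))

/-- A summand `ρ(h_{<t}, m, k)` of the exploration probability; note
`V^{IG}_{m,k}(h_{<t}) = V^{IG}_{m,0}(h_{<t-k})`. -/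
noncomputable def rho (wE : ι → ℝ≥0∞) (νs : ι → MEnv A O R)
    (wP : κ → ℝ≥0∞) (πs : κ → MPolicy A O R) (η : ℝ)
    (h : MHist A O R) (m k : ℕ) : ℝ :=
  (1 / ((m : ℝ)^2 * (m + 1))) *
    min 1 ((η / m) * VIG wE νs wP πs m (h.take (h.length - k)))

/-- Mentee's exploration probability
`β(h_{<t}) = ∑_{m≥1} ∑_{k=0}^{min{m-1,t}} (1/(m²(m+1))) min{1, (η/m) V^{IG}_{m,k}(h_{<t})}`. -/
noncomputable def expProb (wE : ι → ℝ≥0∞) (νs : ι → MEnv A O R)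
    (wP : κ → ℝ≥0∞) (πs : κ → MPolicy A O R) (η : ℝ) (h : MHist A O R) : ℝ :=
  ∑' m : ℕ, ∑ k ∈ Finset.range (min m (h.length + 1)), rho wE νs wP πs η h m k

/-- `Γ_t = ∑_{k ≥ t} γ_k`. -/
noncomputable def Gam (γ : ℕ → ℝ) (t : ℕ) : ℝ := ∑' k : ℕ, γ (t + k)

/-- The value `V^π_ν(h) = (1/Γ_t) E^π_ν[∑_{k ≥ t} γ_k r_k | h]`, `t = |h|`. -/
noncomputable def mval (γ : ℕ → ℝ) (rval : R → ℝ) (π : MPolicy A O R) (ν : MEnv A O R)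
    (h : MHist A O R) : ℝ :=
  (Gam γ h.length)⁻¹ * ∑' n : ℕ, γ (h.length + n) *
    ∑' f : Fin (n + 1) → A × O × R,
      (fragProb π ν h (toFrag (List.ofFn f))).toReal * rval (f (Fin.last n)).2.2

/-- Mentee's policy `π^M = β π^h + (1 - β) π^*`. -/
noncomputable def piM (wE : ι → ℝ≥0∞) (νs : ι → MEnv A O R)
    (wP : κ → ℝ≥0∞) (πs : κ → MPolicy A O R) (η : ℝ)
    (πh πstar : MPolicy A O R) : MPolicy A O R :=
  fun h a => ENNReal.ofReal (expProb wE νs wP πs η h) * πh h a +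
    ENNReal.ofReal (1 - expProb wE νs wP πs η h) * πstar h a

/-- One-step transition probability: `e_t ~ Bernoulli(β(h))`, the action is sampled from
`πe` if `e_t = 1` and from `πx` if `e_t = 0`, and the percept is sampled from `ν`. -/
noncomputable def stepProb (β : MHist A O R → ℝ) (πe πx : MPolicy A O R) (ν : MEnv A O R)
    (h : MHist A O R) (x : MInter A O R) : ℝ≥0∞ :=
  (if x.1 = true then ENNReal.ofReal (β h) else ENNReal.ofReal (1 - β h)) *
    (if x.1 = true then πe h x.2.1 else πx h x.2.1) * ν h x.2.1 x.2.2

/-- Probability of producing exactly the finite history `h`. -/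
noncomputable def mFinProb (β : MHist A O R → ℝ) (πe πx : MPolicy A O R) (ν : MEnv A O R)
    (h : MHist A O R) : ℝ≥0∞ :=
  ∏ k : Fin h.length, stepProb β πe πx ν (h.take k.1) (h.get k)

/-- The cylinder set of infinite histories extending `h`. -/
def mcyl (h : MHist A O R) : Set (MInf A O R) := {ω | ∀ k : Fin h.length, ω k.1 = h.get k}

/-- The finite history formed by the first `t` interactions of `ω` (i.e. `h_{<t}`). -/
def mhist (ω : MInf A O R) (t : ℕ) : MHist A O R := List.ofFn fun k : Fin t => ω k.1

/-- `P` is the measure on infinite histories induced by exploration probability `β`,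
explore-policy `πe`, exploit-policy `πx` and environment `ν`. -/
def IsMInduced [MeasurableSpace A] [MeasurableSpace O] [MeasurableSpace R]
    (P : Measure (MInf A O R)) (β : MHist A O R → ℝ)
    (πe πx : MPolicy A O R) (ν : MEnv A O R) : Prop :=
  IsProbabilityMeasure P ∧ ∀ h : MHist A O R, P (mcyl h) = mFinProb β πe πx ν h

/-- The entropy `Ent(w) = ∑_{ν,π} w(ν,π) log(1/w(ν,π))` of the prior. -/
noncomputable def priorEnt (wE : ι → ℝ≥0∞) (wP : κ → ℝ≥0∞) : ℝ :=
  ∑' (i : ι) (j : κ), (wE i * wP j).toReal * Real.log (1 / (wE i * wP j).toReal)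

/-- The prior has finite entropy. -/
def FiniteEntropy (wE : ι → ℝ≥0∞) (wP : κ → ℝ≥0∞) : Prop :=
  Summable fun p : ι × κ =>
    (wE p.1 * wP p.2).toReal * Real.log (1 / (wE p.1 * wP p.2).toReal)

/-!
Let `D(h)` be the relative entropy of the posterior over environment–policy pairs after `h`
with respect to the prior `w`. Every hypothesis `q` shares the exploration coins `β` and the
exploiting policy `π*`, so the measure `Q` of the statement is the `w`-mixture of the hypothesis
measures `P_q`, and Bayes' rule `w(q) P_q(h) = Q(h) w(q | h)` makes the posterior a
`Q`-martingale. Splitting `D(h_{<t+m}) = IG(h_{t:t+m} | h_{<t}) + ∑_q w(q | h_{<t+m})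
log (w(q | h_{<t}) / w(q))` and averaging the last sum over the block with the martingale property
gives `E D(h_{<t}) + E IG(h_{t:t+m} | h_{<t}) ≤ E D(h_{<t+m})`. Summing over the disjoint blocks
telescopes, and `E D(h_{<T}) ≤ ∑_q E[w(q | h_{<T})] log (1 / w(q)) = Ent(w)`.
-/

section RelativeEntropy

variable {α : Type*}

/-- Only meaningful when `p ≤ C * r`: a term with `r a = 0 < p a` evaluates to `0`. -/
noncomputable def relEntropy (p r : α → ℝ) : ℝ := ∑' a, p a * Real.log (p a / r a)

lemma pos_of_le_mul {x w C : ℝ} (hx : 0 < x) (hw : 0 ≤ w) (hxw : x ≤ C * w) : 0 < w := by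
  rcases hw.eq_or_lt with rfl | hw
  · linarith [mul_zero C]
  · exact hw

lemma sub_le_mul_log_div {x w C : ℝ} (hx : 0 ≤ x) (hw : 0 ≤ w) (hxw : x ≤ C * w) :
    x - w ≤ x * Real.log (x / w) := by
  rcases hx.eq_or_lt with rfl | hx
  · simpa using hw
  have hw := pos_of_le_mul hx hw hxw
  have hlog := Real.one_sub_inv_le_log_of_pos (div_pos hx hw)
  rw [inv_div] at hlog
  calc x - w = x * (1 - w / x) := by field_simp
    _ ≤ x * Real.log (x / w) := mul_le_mul_of_nonneg_left hlog hx.le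

lemma abs_mul_log_div_le {x w C : ℝ} (hx : 0 ≤ x) (hw : 0 ≤ w) (hxw : x ≤ C * w) :
    |x * Real.log (x / w)| ≤ x * max (Real.log C) 0 + w := by
  rcases hx.eq_or_lt with rfl | hx'
  · simpa using hw
  have hw' := pos_of_le_mul hx' hw hxw
  have hlog : Real.log (x / w) ≤ max (Real.log C) 0 :=
    le_max_of_le_left (Real.log_le_log (div_pos hx' hw') ((div_le_iff₀ hw').2 hxw))
  have hlower := sub_le_mul_log_div hx hw hxw
  have hupper := mul_le_mul_of_nonneg_left hlog hx
  have hmax : 0 ≤ x * max (Real.log C) 0 := mul_nonneg hx (le_max_right _ _)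
  rw [abs_le]
  constructor <;> linarith

lemma log_one_div_nonneg {r : ℝ} (hr0 : 0 ≤ r) (hr1 : r ≤ 1) : 0 ≤ Real.log (1 / r) := by
  rw [one_div, Real.log_inv, neg_nonneg]
  exact Real.log_nonpos hr0 hr1

variable {p q r : α → ℝ} {C : ℝ}

lemma summable_abs_mul_log_div (hp : ∀ a, 0 ≤ p a) (hr : ∀ a, 0 ≤ r a) (hps : Summable p)
    (hrs : Summable r) (hpr : ∀ a, p a ≤ C * r a) :
    Summable fun a => |p a * Real.log (p a / r a)| :=
  .of_nonneg_of_le (fun _ => abs_nonneg _) (fun a => abs_mul_log_div_le (hp a) (hr a) (hpr a))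
    ((hps.mul_right _).add hrs)

lemma relEntropy_nonneg (hp : ∀ a, 0 ≤ p a) (hr : ∀ a, 0 ≤ r a) (hps : Summable p)
    (hrs : Summable r) (hpr : ∀ a, p a ≤ C * r a) (hsum : ∑' a, r a ≤ ∑' a, p a) :
    0 ≤ relEntropy p r := by
  have hle : ∑' a, (p a - r a) ≤ relEntropy p r :=
    (hps.sub hrs).tsum_le_tsum (fun a => sub_le_mul_log_div (hp a) (hr a) (hpr a))
      (summable_abs_mul_log_div hp hr hps hrs hpr).of_abs
  rw [hps.tsum_sub hrs] at hle
  linarith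

lemma relEntropy_eq_add (hp : ∀ a, 0 ≤ p a) (hq : ∀ a, 0 ≤ q a) (hr : ∀ a, 0 ≤ r a)
    (hps : Summable p) (hqs : Summable q) (hrs : Summable r) {C' : ℝ}
    (hpq : ∀ a, p a ≤ C * q a) (hpr : ∀ a, p a ≤ C' * r a) :
    relEntropy p r = relEntropy p q + ∑' a, p a * Real.log (q a / r a) := by
  have hsplit : ∀ a, p a * Real.log (p a / r a)
      = p a * Real.log (p a / q a) + p a * Real.log (q a / r a) := by
    intro a
    rcases (hp a).eq_or_lt with h0 | hpos
    · simp [← h0]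
    have hqa := pos_of_le_mul hpos (hq a) (hpq a)
    have hra := pos_of_le_mul hpos (hr a) (hpr a)
    rw [Real.log_div hpos.ne' hqa.ne', Real.log_div hpos.ne' hra.ne',
      Real.log_div hqa.ne' hra.ne']
    ring
  have hpqs := (summable_abs_mul_log_div hp hq hps hqs hpq).of_abs
  have hprs := (summable_abs_mul_log_div hp hr hps hrs hpr).of_abs
  have hcross : Summable fun a => p a * Real.log (q a / r a) :=
    (hprs.sub hpqs).congr fun a => by rw [hsplit a]; ring
  rw [relEntropy, relEntropy, ← hpqs.tsum_add hcross]
  exact tsum_congr hsplit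

lemma ofReal_relEntropy_le (hp : ∀ a, 0 ≤ p a) (hp1 : ∀ a, p a ≤ 1) (hr : ∀ a, 0 ≤ r a)
    (hr1 : ∀ a, r a ≤ 1) (hps : Summable p) (hrs : Summable r) (hpr : ∀ a, p a ≤ C * r a) :
    ENNReal.ofReal (relEntropy p r) ≤ ∑' a, ENNReal.ofReal (p a * Real.log (1 / r a)) := by
  by_cases htop : ∑' a, ENNReal.ofReal (p a * Real.log (1 / r a)) = ⊤
  · rw [htop]; exact le_top
  have hnn : ∀ a, 0 ≤ p a * Real.log (1 / r a) := fun a =>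
    mul_nonneg (hp a) (log_one_div_nonneg (hr a) (hr1 a))
  have hsum : Summable fun a => p a * Real.log (1 / r a) := by
    have := ENNReal.summable_toReal htop
    simp only [ENNReal.toReal_ofReal (hnn _)] at this
    exact this
  rw [← ENNReal.ofReal_tsum_of_nonneg hnn hsum]
  refine ENNReal.ofReal_le_ofReal (Summable.tsum_le_tsum (fun a => ?_)
    (summable_abs_mul_log_div hp hr hps hrs hpr).of_abs hsum)
  rcases (hp a).eq_or_lt with h0 | hpos
  · simp [← h0]
  have hra := pos_of_le_mul hpos (hr a) (hpr a)
  exact mul_le_mul_of_nonneg_left (Real.log_le_log (div_pos hpos hra)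
    (div_le_div_of_nonneg_right (hp1 a) hra.le)) (hp a)

lemma hasSum_mul_tsum_of_hasSum {Y : Type*} {μ : Y → ℝ} {p : Y → α → ℝ} {φ : α → ℝ}
    (hμ : ∀ y, 0 ≤ μ y) (hp : ∀ y a, 0 ≤ p y a) (hq : ∀ a, HasSum (fun y => μ y * p y a) (q a))
    (hφ : Summable fun a => q a * |φ a|) :
    HasSum (fun y => μ y * ∑' a, p y a * φ a) (∑' a, q a * φ a) := by
  set F : α × Y → ℝ := fun x => μ x.2 * p x.2 x.1 * φ x.1
  have habs : ∀ x, |F x| = μ x.2 * p x.2 x.1 * |φ x.1| := fun x => by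
    simp only [F, abs_mul, abs_of_nonneg (hμ _), abs_of_nonneg (hp _ _)]
  have hF : Summable F := by
    refine Summable.of_abs ((summable_prod_of_nonneg fun _ => abs_nonneg _).2 ⟨fun a => ?_, ?_⟩)
    · simpa only [habs] using ((hq a).mul_right |φ a|).summable
    · simpa only [habs, ((hq _).mul_right _).tsum_eq] using hφ
  have htotal : ∑' x, F x = ∑' a, q a * φ a :=
    (hF.hasSum.prod_fiberwise fun a => (hq a).mul_right (φ a)).tsum_eq.symm
  have hswap := hF.prod_symm.hasSum.prod_fiberwise fun y => (hF.prod_symm.prod_factor y).hasSum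
  have hswapTotal : ∑' x : Y × α, F x.swap = ∑' x, F x := (Equiv.prodComm Y α).tsum_eq F
  rw [hswapTotal, htotal] at hswap
  convert hswap using 2 with y
  simp only [F, mul_assoc, Prod.swap, tsum_mul_left]

end RelativeEntropy

lemma ofReal_add_tsum_ofReal_le {Y : Type*} {a b c : Y → ℝ} {B : ℝ} (ha : ∀ y, 0 ≤ a y)
    (hc : ∀ y, 0 ≤ c y) (habc : ∀ y, c y = a y + b y) (hb : HasSum b B) (hB : 0 ≤ B) :
    ENNReal.ofReal B + ∑' y, ENNReal.ofReal (a y) ≤ ∑' y, ENNReal.ofReal (c y) := by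
  by_cases htop : ∑' y, ENNReal.ofReal (c y) = ⊤
  · simp [htop]
  have hcs : Summable c := by
    simpa [ENNReal.toReal_ofReal (hc _)] using ENNReal.summable_toReal htop
  have has : HasSum a (∑' y, c y - B) :=
    (hcs.hasSum.sub hb).congr_fun fun y => by rw [habc y]; ring
  rw [← ENNReal.ofReal_tsum_of_nonneg hc hcs, ← ENNReal.ofReal_tsum_of_nonneg ha has.summable,
    has.tsum_eq, ← ENNReal.ofReal_add hB (has.nonneg ha), add_sub_cancel]

lemma div_mul_cancel_of_le {a b : ℝ≥0∞} (hab : a ≤ b) (hb : b ≠ ⊤) : a / b * b = a := by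
  rcases eq_or_ne b 0 with rfl | hb0
  · simp [nonpos_iff_eq_zero.1 hab]
  · exact ENNReal.div_mul_cancel hb0 hb

lemma toReal_le_inv_mul_of_mul_le {c x y : ℝ≥0∞} (hc0 : c ≠ 0) (hc : c ≠ ⊤) (hy : y ≠ ⊤)
    (h : c * x ≤ y) : x.toReal ≤ c.toReal⁻¹ * y.toReal := by
  rw [le_inv_mul_iff₀ (ENNReal.toReal_pos hc0 hc), ← ENNReal.toReal_mul]
  exact ENNReal.toReal_mono hy h

lemma tsum_le_of_add_le_succ {a b : ℕ → ℝ≥0∞} {C : ℝ≥0∞} (hab : ∀ n, a n + b n ≤ a (n + 1))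
    (ha : ∀ n, a n ≤ C) : ∑' n, b n ≤ C := by
  have hpartial : ∀ N, a 0 + ∑ n ∈ Finset.range N, b n ≤ a N := by
    intro N
    induction N with
    | zero => simp
    | succ N ih =>
      rw [Finset.sum_range_succ, ← add_assoc]
      exact (add_le_add_left ih _).trans (hab N)
  exact ENNReal.tsum_le_of_sum_range_le fun N => le_add_self.trans ((hpartial N).trans (ha N))

/-- The fibres of `t` need not be measurable, so this is only an inequality. -/
lemma lintegral_comp_le_tsum {Ω J : Type*} [MeasurableSpace Ω] [Countable J] (μ : Measure Ω)
    (t : Ω → J) (c : J → ℝ≥0∞) :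
    ∫⁻ x, c (t x) ∂μ ≤ ∑' j, c j * μ (t ⁻¹' {j}) := by
  rw [← iSup_lintegral_measurable_le_eq_lintegral]
  refine iSup₂_le fun g hg => iSup_le fun hgc => ?_
  have hcover : ⋃ j, t ⁻¹' {j} = Set.univ := by
    rw [← Set.preimage_iUnion, Set.iUnion_singleton_eq_range, Set.range_id', Set.preimage_univ]
  calc ∫⁻ x, g x ∂μ = ∫⁻ x in ⋃ j, t ⁻¹' {j}, g x ∂μ := by rw [hcover, Measure.restrict_univ]
    _ ≤ ∑' j, ∫⁻ x in t ⁻¹' {j}, g x ∂μ := lintegral_iUnion_le _ _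
    _ ≤ ∑' j, c j * μ (t ⁻¹' {j}) := by
      refine ENNReal.tsum_le_tsum fun j => ?_
      have hae : ∀ᵐ x ∂μ.restrict (t ⁻¹' {j}), g x ≤ c j := by
        simp only [ae_iff, not_le]
        rw [Measure.restrict_apply (measurableSet_lt measurable_const hg)]
        convert measure_empty (μ := μ)
        ext x
        simp only [Set.mem_inter_iff, Set.mem_ofPred_eq, Set.mem_preimage,
          Set.mem_singleton_iff, Set.mem_empty_iff_false, iff_false, not_and]
        exact fun hlt hx => (hgc x).not_gt (by simpa [hx] using hlt)
      exact (lintegral_mono_ae hae).trans_eq (by rw [setLIntegral_const])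

section HistoryProducts

noncomputable def histProd (F : MHist A O R → MInter A O R → ℝ≥0∞) (h : MHist A O R) : ℝ≥0∞ :=
  ∏ k : Fin h.length, F (h.take k.1) (h.get k)

variable (F : MHist A O R → MInter A O R → ℝ≥0∞)

@[simp] lemma histProd_nil : histProd F [] = 1 := by
  simp [histProd]

lemma histProd_concat (h : MHist A O R) (x : MInter A O R) :
    histProd F (h ++ [x]) = histProd F h * F h x := by
  have hlen : (h ++ [x]).length = h.length + 1 := by simp
  rw [histProd, ← Fintype.prod_equiv (finCongr hlen.symm) (fun k : Fin (h.length + 1) =>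
    F ((h ++ [x]).take k.1) ((h ++ [x])[k.1])) _ (fun _ => rfl), Fin.prod_univ_castSucc, histProd]
  congr 1
  · refine Finset.prod_congr rfl fun k _ => ?_
    simp [List.take_append_of_le_length k.2.le, List.getElem_append_left k.2]
  · simp

lemma histProd_append (g l : MHist A O R) :
    histProd F (g ++ l) = histProd F g * histProd (fun h => F (g ++ h)) l := by
  induction l using List.reverseRecOn with
  | nil => simp
  | append_singleton l x ih =>
    rw [← List.append_assoc, histProd_concat, ih, histProd_concat, mul_assoc]

variable {F}

lemma histProd_le_one (hF : ∀ g x, F g x ≤ 1) (h : MHist A O R) : histProd F h ≤ 1 :=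
  Finset.prod_le_one' fun _ _ => hF _ _

lemma histProd_append_le (hF : ∀ g x, F g x ≤ 1) (g l : MHist A O R) :
    histProd F (g ++ l) ≤ histProd F g := by
  rw [histProd_append]
  exact mul_le_of_le_one_right' (histProd_le_one (fun _ _ => hF _ _) l)

end HistoryProducts

lemma IsMPolicy.le_one {π : MPolicy A O R} (hπ : IsMPolicy π) (h : MHist A O R) (a : A) :
    π h a ≤ 1 :=
  (ENNReal.le_tsum a).trans_eq (hπ h)

lemma IsMEnv.le_one {ν : MEnv A O R} (hν : IsMEnv ν) (h : MHist A O R) (a : A) (p : O × R) :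
    ν h a p ≤ 1 :=
  (ENNReal.le_tsum p).trans_eq (hν h a)

section HistoryProbabilities

variable {β : MHist A O R → ℝ} {πe πx : MPolicy A O R} {ν : MEnv A O R}

lemma mFinProb_concat (h : MHist A O R) (x : MInter A O R) :
    mFinProb β πe πx ν (h ++ [x]) = mFinProb β πe πx ν h * stepProb β πe πx ν h x :=
  histProd_concat _ h x

lemma stepProb_le_one (hβ : ∀ h, β h ∈ Set.Icc (0 : ℝ) 1) (hπe : IsMPolicy πe)
    (hπx : IsMPolicy πx) (hν : IsMEnv ν) (h : MHist A O R) (x : MInter A O R) :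
    stepProb β πe πx ν h x ≤ 1 := by
  obtain ⟨hβ0, hβ1⟩ := hβ h
  refine mul_le_one' (mul_le_one' ?_ ?_) (hν.le_one _ _ _)
  · split_ifs
    · exact ENNReal.ofReal_le_one.2 hβ1
    · exact ENNReal.ofReal_le_one.2 (by linarith)
  · split_ifs
    · exact hπe.le_one _ _
    · exact hπx.le_one _ _

lemma mFinProb_le_one (hβ : ∀ h, β h ∈ Set.Icc (0 : ℝ) 1) (hπe : IsMPolicy πe)
    (hπx : IsMPolicy πx) (hν : IsMEnv ν) (h : MHist A O R) : mFinProb β πe πx ν h ≤ 1 :=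
  histProd_le_one (stepProb_le_one hβ hπe hπx hν) h

lemma mFinProb_append_le (hβ : ∀ h, β h ∈ Set.Icc (0 : ℝ) 1) (hπe : IsMPolicy πe)
    (hπx : IsMPolicy πx) (hν : IsMEnv ν) (g l : MHist A O R) :
    mFinProb β πe πx ν (g ++ l) ≤ mFinProb β πe πx ν g :=
  histProd_append_le (stepProb_le_one hβ hπe hπx hν) g l

lemma tsum_stepProb (hβ : ∀ h, β h ∈ Set.Icc (0 : ℝ) 1) (hπe : IsMPolicy πe)
    (hπx : IsMPolicy πx) (hν : IsMEnv ν) (h : MHist A O R) :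
    ∑' x, stepProb β πe πx ν h x = 1 := by
  have hsum : ∀ (c : ℝ≥0∞) (π : MPolicy A O R), IsMPolicy π →
      ∑' y : A × O × R, c * π h y.1 * ν h y.1 y.2 = c := fun c π hπ => by
    rw [ENNReal.tsum_prod']
    simp_rw [ENNReal.tsum_mul_left, hν h, mul_one, ENNReal.tsum_mul_left, hπ h, mul_one]
  rw [ENNReal.tsum_prod', tsum_bool]
  simp only [stepProb, Bool.false_eq_true, if_false, if_true]
  rw [hsum _ _ hπx, hsum _ _ hπe, ← ENNReal.ofReal_add (by linarith [(hβ h).2]) (hβ h).1]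
  simp

lemma tsum_mFinProb_append (hβ : ∀ h, β h ∈ Set.Icc (0 : ℝ) 1) (hπe : IsMPolicy πe)
    (hπx : IsMPolicy πx) (hν : IsMEnv ν) (h : MHist A O R) (n : ℕ) :
    ∑' f : Fin n → MInter A O R, mFinProb β πe πx ν (h ++ List.ofFn f) = mFinProb β πe πx ν h := by
  induction n with
  | zero => simp [tsum_fintype]
  | succ n ih =>
    rw [← (Fin.appendEquiv n 1).tsum_eq, ENNReal.tsum_prod', ← ih]
    refine tsum_congr fun g => ?_
    rw [← (Equiv.funUnique (Fin 1) _).symm.tsum_eq]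
    have hofn : ∀ x, List.ofFn (Fin.appendEquiv n 1 (g, uniqueElim x)) = List.ofFn g ++ [x] :=
      fun x => (List.ofFn_fin_append g _).trans (by simp)
    simp only [Equiv.funUnique_symm_apply, hofn, ← List.append_assoc, mFinProb_concat,
      ENNReal.tsum_mul_left, tsum_stepProb hβ hπe hπx hν, mul_one]

end HistoryProbabilities

lemma envLik_concat (ν : MEnv A O R) (h : MHist A O R) (x : MInter A O R) :
    envLik ν (h ++ [x]) = envLik ν h * ν h x.2.1 x.2.2 :=
  histProd_concat (fun g y => ν g y.2.1 y.2.2) h x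

lemma polLik_concat (π : MPolicy A O R) (h : MHist A O R) (x : MInter A O R) :
    polLik π (h ++ [x]) = polLik π h * if x.1 = true then π h x.2.1 else 1 :=
  histProd_concat (fun g y => if y.1 = true then π g y.2.1 else 1) h x

lemma envLik_le_one {ν : MEnv A O R} (hν : IsMEnv ν) (h : MHist A O R) : envLik ν h ≤ 1 :=
  histProd_le_one (F := fun g y => ν g y.2.1 y.2.2) (fun _ _ => hν.le_one _ _ _) h

lemma polLik_le_one {π : MPolicy A O R} (hπ : IsMPolicy π) (h : MHist A O R) : polLik π h ≤ 1 :=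
  histProd_le_one (F := fun g y => if y.1 = true then π g y.2.1 else 1)
    (fun _ _ => by split_ifs <;> simp [hπ.le_one]) h

/-- The part of `mFinProb` that depends neither on the mentor policy nor on the environment:
the exploration coins and the exploiting actions. -/
noncomputable def flagLik (β : MHist A O R → ℝ) (πx : MPolicy A O R) : MHist A O R → ℝ≥0∞ :=
  histProd fun g y => (if y.1 = true then ENNReal.ofReal (β g) else ENNReal.ofReal (1 - β g)) *
    if y.1 = true then 1 else πx g y.2.1

lemma mFinProb_eq_flagLik_mul (β : MHist A O R → ℝ) (πe πx : MPolicy A O R) (ν : MEnv A O R)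
    (h : MHist A O R) :
    mFinProb β πe πx ν h = flagLik β πx h * (polLik πe h * envLik ν h) := by
  induction h using List.reverseRecOn with
  | nil => simp [mFinProb, flagLik, polLik, envLik]
  | append_singleton h x ih =>
    rw [mFinProb_concat, ih, flagLik, histProd_concat, ← flagLik, polLik_concat, envLik_concat]
    obtain ⟨_ | _, a, p⟩ := x <;> simp [stepProb] <;> ring

section BayesMixture

variable {wE : ι → ℝ≥0∞} {wP : κ → ℝ≥0∞} {νs : ι → MEnv A O R} {πs : κ → MPolicy A O R}

lemma postE_mul_tsum (hwE : ∑' i, wE i = 1) (hνs : ∀ i, IsMEnv (νs i)) (h : MHist A O R)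
    (i : ι) : postE wE νs h i * ∑' i', wE i' * envLik (νs i') h = wE i * envLik (νs i) h :=
  div_mul_cancel_of_le (ENNReal.le_tsum i) <| ne_top_of_le_ne_top ENNReal.one_ne_top <|
    (ENNReal.tsum_le_tsum fun i' => mul_le_of_le_one_right' (envLik_le_one (hνs i') h)).trans_eq
      hwE

lemma postP_mul_tsum (hwP : ∑' j, wP j = 1) (hπs : ∀ j, IsMPolicy (πs j)) (h : MHist A O R)
    (j : κ) : postP wP πs h j * ∑' j', wP j' * polLik (πs j') h = wP j * polLik (πs j) h :=
  div_mul_cancel_of_le (ENNReal.le_tsum j) <| ne_top_of_le_ne_top ENNReal.one_ne_top <|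
    (ENNReal.tsum_le_tsum fun j' => mul_le_of_le_one_right' (polLik_le_one (hπs j') h)).trans_eq
      hwP

lemma envLik_xi (hwE : ∑' i, wE i = 1) (hνs : ∀ i, IsMEnv (νs i)) (h : MHist A O R) :
    envLik (xi wE νs) h = ∑' i, wE i * envLik (νs i) h := by
  induction h using List.reverseRecOn with
  | nil => simp [envLik, hwE]
  | append_singleton h x ih =>
    simp_rw [envLik_concat, ih, xi, ← ENNReal.tsum_mul_left, ← mul_assoc]
    refine tsum_congr fun i => ?_
    rw [mul_comm (∑' i', _), postE_mul_tsum hwE hνs]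

lemma polLik_pibar (hwP : ∑' j, wP j = 1) (hπs : ∀ j, IsMPolicy (πs j)) (h : MHist A O R) :
    polLik (pibar wP πs) h = ∑' j, wP j * polLik (πs j) h := by
  induction h using List.reverseRecOn with
  | nil => simp [polLik, hwP]
  | append_singleton h x ih =>
    simp_rw [polLik_concat, ih]
    split_ifs
    · simp_rw [pibar, ← ENNReal.tsum_mul_left, ← mul_assoc]
      refine tsum_congr fun j => ?_
      rw [mul_comm (∑' j', _), postP_mul_tsum hwP hπs]
    · simp

noncomputable def prior (wE : ι → ℝ≥0∞) (wP : κ → ℝ≥0∞) (q : ι × κ) : ℝ≥0∞ := wE q.1 * wP q.2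

noncomputable def jointPost (wE : ι → ℝ≥0∞) (νs : ι → MEnv A O R) (wP : κ → ℝ≥0∞)
    (πs : κ → MPolicy A O R) (h : MHist A O R) (q : ι × κ) : ℝ≥0∞ :=
  postE wE νs h q.1 * postP wP πs h q.2

noncomputable def hypProb (νs : ι → MEnv A O R) (πs : κ → MPolicy A O R) (β : MHist A O R → ℝ)
    (πstar : MPolicy A O R) (q : ι × κ) : MHist A O R → ℝ≥0∞ :=
  mFinProb β (πs q.2) πstar (νs q.1)

noncomputable def mixProb (wE : ι → ℝ≥0∞) (νs : ι → MEnv A O R) (wP : κ → ℝ≥0∞)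
    (πs : κ → MPolicy A O R) (β : MHist A O R → ℝ) (πstar : MPolicy A O R) :
    MHist A O R → ℝ≥0∞ :=
  mFinProb β (pibar wP πs) πstar (xi wE νs)

variable {β : MHist A O R → ℝ} {πstar : MPolicy A O R}

lemma tsum_prior (hwE : ∑' i, wE i = 1) (hwP : ∑' j, wP j = 1) : ∑' q, prior wE wP q = 1 := by
  simp_rw [ENNReal.tsum_prod', prior, ENNReal.tsum_mul_left, hwP, mul_one, hwE]

lemma prior_le_one (hwE : ∑' i, wE i = 1) (hwP : ∑' j, wP j = 1) (q : ι × κ) :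
    prior wE wP q ≤ 1 :=
  (ENNReal.le_tsum q).trans_eq (tsum_prior hwE hwP)

lemma jointPost_le_one (h : MHist A O R) (q : ι × κ) : jointPost wE νs wP πs h q ≤ 1 :=
  mul_le_one' (ENNReal.div_le_of_le_mul (by rw [one_mul]; exact ENNReal.le_tsum q.1))
    (ENNReal.div_le_of_le_mul (by rw [one_mul]; exact ENNReal.le_tsum q.2))

lemma prior_toReal_le_one (hwE : ∑' i, wE i = 1) (hwP : ∑' j, wP j = 1) (q : ι × κ) :
    (prior wE wP q).toReal ≤ 1 :=
  ENNReal.toReal_le_of_le_ofReal zero_le_one (by simpa using prior_le_one hwE hwP q)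

lemma jointPost_toReal_le_one (h : MHist A O R) (q : ι × κ) :
    (jointPost wE νs wP πs h q).toReal ≤ 1 :=
  ENNReal.toReal_le_of_le_ofReal zero_le_one (by simpa using jointPost_le_one h q)

lemma jointPost_ne_top (h : MHist A O R) (q : ι × κ) : jointPost wE νs wP πs h q ≠ ⊤ :=
  ne_top_of_le_ne_top ENNReal.one_ne_top (jointPost_le_one h q)

lemma prior_ne_top (hwE : ∑' i, wE i = 1) (hwP : ∑' j, wP j = 1) (q : ι × κ) :
    prior wE wP q ≠ ⊤ :=
  ne_top_of_le_ne_top ENNReal.one_ne_top (prior_le_one hwE hwP q)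

lemma prior_mul_hypProb (hwE : ∑' i, wE i = 1) (hνs : ∀ i, IsMEnv (νs i))
    (hwP : ∑' j, wP j = 1) (hπs : ∀ j, IsMPolicy (πs j)) (q : ι × κ) (h : MHist A O R) :
    prior wE wP q * hypProb νs πs β πstar q h
      = mixProb wE νs wP πs β πstar h * jointPost wE νs wP πs h q := by
  rw [hypProb, mixProb, mFinProb_eq_flagLik_mul, mFinProb_eq_flagLik_mul, polLik_pibar hwP hπs,
    envLik_xi hwE hνs, jointPost, prior]
  calc _ = flagLik β πstar h * (wP q.2 * polLik (πs q.2) h) * (wE q.1 * envLik (νs q.1) h) := by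
        ring
    _ = _ := by rw [← postE_mul_tsum hwE hνs h q.1, ← postP_mul_tsum hwP hπs h q.2]; ring

lemma mixProb_eq_tsum (hwE : ∑' i, wE i = 1) (hνs : ∀ i, IsMEnv (νs i))
    (hwP : ∑' j, wP j = 1) (hπs : ∀ j, IsMPolicy (πs j)) (h : MHist A O R) :
    mixProb wE νs wP πs β πstar h = ∑' q, prior wE wP q * hypProb νs πs β πstar q h := by
  rw [mixProb, mFinProb_eq_flagLik_mul, polLik_pibar hwP hπs, envLik_xi hwE hνs,
    ENNReal.tsum_prod', mul_comm (∑' j, _), ← ENNReal.tsum_mul_right, ← ENNReal.tsum_mul_left]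
  refine tsum_congr fun i => ?_
  rw [← ENNReal.tsum_mul_left, ← ENNReal.tsum_mul_left]
  refine tsum_congr fun j => ?_
  rw [prior, hypProb, mFinProb_eq_flagLik_mul]
  ring

lemma tsum_hypProb (hνs : ∀ i, IsMEnv (νs i)) (hπs : ∀ j, IsMPolicy (πs j))
    (hβ : ∀ h, β h ∈ Set.Icc (0 : ℝ) 1) (hstar : IsMPolicy πstar) (q : ι × κ) (T : ℕ) :
    ∑' v : Fin T → MInter A O R, hypProb νs πs β πstar q (List.ofFn v) = 1 := by
  have h := tsum_mFinProb_append hβ (hπs q.2) hstar (hνs q.1) [] T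
  simp only [List.nil_append] at h
  exact h.trans (by simp [mFinProb])

lemma mixProb_le_one (hwE : ∑' i, wE i = 1) (hνs : ∀ i, IsMEnv (νs i))
    (hwP : ∑' j, wP j = 1) (hπs : ∀ j, IsMPolicy (πs j)) (hβ : ∀ h, β h ∈ Set.Icc (0 : ℝ) 1)
    (hstar : IsMPolicy πstar) (h : MHist A O R) : mixProb wE νs wP πs β πstar h ≤ 1 := by
  rw [mixProb_eq_tsum hwE hνs hwP hπs]
  refine (ENNReal.tsum_le_tsum fun q => ?_).trans_eq (tsum_prior hwE hwP)
  exact mul_le_of_le_one_right' (mFinProb_le_one hβ (hπs q.2) hstar (hνs q.1) h)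

lemma mixProb_ne_top (hwE : ∑' i, wE i = 1) (hνs : ∀ i, IsMEnv (νs i))
    (hwP : ∑' j, wP j = 1) (hπs : ∀ j, IsMPolicy (πs j)) (hβ : ∀ h, β h ∈ Set.Icc (0 : ℝ) 1)
    (hstar : IsMPolicy πstar) (h : MHist A O R) : mixProb wE νs wP πs β πstar h ≠ ⊤ :=
  ne_top_of_le_ne_top ENNReal.one_ne_top (mixProb_le_one hwE hνs hwP hπs hβ hstar h)

lemma mixProb_append_le (hwE : ∑' i, wE i = 1) (hνs : ∀ i, IsMEnv (νs i))
    (hwP : ∑' j, wP j = 1) (hπs : ∀ j, IsMPolicy (πs j)) (hβ : ∀ h, β h ∈ Set.Icc (0 : ℝ) 1)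
    (hstar : IsMPolicy πstar) (g l : MHist A O R) :
    mixProb wE νs wP πs β πstar (g ++ l) ≤ mixProb wE νs wP πs β πstar g := by
  simp_rw [mixProb_eq_tsum hwE hνs hwP hπs]
  exact ENNReal.tsum_le_tsum fun q =>
    mul_le_mul_right (mFinProb_append_le hβ (hπs q.2) hstar (hνs q.1) g l) _

lemma tsum_jointPost (hwE : ∑' i, wE i = 1) (hνs : ∀ i, IsMEnv (νs i))
    (hwP : ∑' j, wP j = 1) (hπs : ∀ j, IsMPolicy (πs j)) (hβ : ∀ h, β h ∈ Set.Icc (0 : ℝ) 1)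
    (hstar : IsMPolicy πstar) {h : MHist A O R} (hQ : mixProb wE νs wP πs β πstar h ≠ 0) :
    ∑' q, jointPost wE νs wP πs h q = 1 := by
  refine (ENNReal.mul_right_inj hQ
    (mixProb_ne_top hwE hνs hwP hπs hβ hstar h)).1 ?_
  calc mixProb wE νs wP πs β πstar h * ∑' q, jointPost wE νs wP πs h q
      = ∑' q, prior wE wP q * hypProb νs πs β πstar q h := by
        rw [← ENNReal.tsum_mul_left]
        exact tsum_congr fun q => (prior_mul_hypProb hwE hνs hwP hπs q h).symm
    _ = mixProb wE νs wP πs β πstar h * 1 := by rw [mul_one, mixProb_eq_tsum hwE hνs hwP hπs]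

/-- The posterior is a martingale under the mixture measure. -/
lemma tsum_mixProb_mul_jointPost_append (hwE : ∑' i, wE i = 1) (hνs : ∀ i, IsMEnv (νs i))
    (hwP : ∑' j, wP j = 1) (hπs : ∀ j, IsMPolicy (πs j)) (hβ : ∀ h, β h ∈ Set.Icc (0 : ℝ) 1)
    (hstar : IsMPolicy πstar) (g : MHist A O R) (n : ℕ) (q : ι × κ) :
    ∑' f : Fin n → MInter A O R, mixProb wE νs wP πs β πstar (g ++ List.ofFn f) *
        jointPost wE νs wP πs (g ++ List.ofFn f) q
      = mixProb wE νs wP πs β πstar g * jointPost wE νs wP πs g q := by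
  simp_rw [← prior_mul_hypProb hwE hνs hwP hπs, ENNReal.tsum_mul_left, hypProb,
    tsum_mFinProb_append hβ (hπs q.2) hstar (hνs q.1)]

lemma jointPost_toReal_le (hwE : ∑' i, wE i = 1) (hνs : ∀ i, IsMEnv (νs i))
    (hwP : ∑' j, wP j = 1) (hπs : ∀ j, IsMPolicy (πs j)) (hβ : ∀ h, β h ∈ Set.Icc (0 : ℝ) 1)
    (hstar : IsMPolicy πstar) {h : MHist A O R} (hQ : mixProb wE νs wP πs β πstar h ≠ 0)
    (q : ι × κ) :
    (jointPost wE νs wP πs h q).toReal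
      ≤ (mixProb wE νs wP πs β πstar h).toReal⁻¹ * (prior wE wP q).toReal := by
  refine toReal_le_inv_mul_of_mul_le hQ (mixProb_ne_top hwE hνs hwP hπs hβ hstar h)
    (prior_ne_top hwE hwP q) ?_
  rw [← prior_mul_hypProb hwE hνs hwP hπs]
  exact mul_le_of_le_one_right' (mFinProb_le_one hβ (hπs q.2) hstar (hνs q.1) h)

lemma jointPost_append_toReal_le (hwE : ∑' i, wE i = 1) (hνs : ∀ i, IsMEnv (νs i))
    (hwP : ∑' j, wP j = 1) (hπs : ∀ j, IsMPolicy (πs j)) (hβ : ∀ h, β h ∈ Set.Icc (0 : ℝ) 1)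
    (hstar : IsMPolicy πstar) {g l : MHist A O R}
    (hQ : mixProb wE νs wP πs β πstar (g ++ l) ≠ 0) (q : ι × κ) :
    (jointPost wE νs wP πs (g ++ l) q).toReal
      ≤ (mixProb wE νs wP πs β πstar (g ++ l)).toReal⁻¹ * (mixProb wE νs wP πs β πstar g).toReal *
        (jointPost wE νs wP πs g q).toReal := by
  rw [mul_assoc, ← ENNReal.toReal_mul]
  refine toReal_le_inv_mul_of_mul_le hQ (mixProb_ne_top hwE hνs hwP hπs hβ hstar _)
    (ENNReal.mul_ne_top (mixProb_ne_top hwE hνs hwP hπs hβ hstar g) (jointPost_ne_top g q)) ?_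
  rw [← prior_mul_hypProb hwE hνs hwP hπs, ← prior_mul_hypProb hwE hνs hwP hπs]
  exact mul_le_mul_right (mFinProb_append_le hβ (hπs q.2) hstar (hνs q.1) g l) _

lemma summable_jointPost_toReal (hwE : ∑' i, wE i = 1) (hνs : ∀ i, IsMEnv (νs i))
    (hwP : ∑' j, wP j = 1) (hπs : ∀ j, IsMPolicy (πs j)) (hβ : ∀ h, β h ∈ Set.Icc (0 : ℝ) 1)
    (hstar : IsMPolicy πstar) {h : MHist A O R} (hQ : mixProb wE νs wP πs β πstar h ≠ 0) :
    Summable fun q => (jointPost wE νs wP πs h q).toReal :=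
  ENNReal.summable_toReal (by rw [tsum_jointPost hwE hνs hwP hπs hβ hstar hQ]; simp)

lemma tsum_jointPost_toReal (hwE : ∑' i, wE i = 1) (hνs : ∀ i, IsMEnv (νs i))
    (hwP : ∑' j, wP j = 1) (hπs : ∀ j, IsMPolicy (πs j)) (hβ : ∀ h, β h ∈ Set.Icc (0 : ℝ) 1)
    (hstar : IsMPolicy πstar) {h : MHist A O R} (hQ : mixProb wE νs wP πs β πstar h ≠ 0) :
    ∑' q, (jointPost wE νs wP πs h q).toReal = 1 := by
  rw [← ENNReal.tsum_toReal_eq (jointPost_ne_top h),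
    tsum_jointPost hwE hνs hwP hπs hβ hstar hQ, ENNReal.toReal_one]

lemma summable_prior_toReal (hwE : ∑' i, wE i = 1) (hwP : ∑' j, wP j = 1) :
    Summable fun q => (prior wE wP q).toReal :=
  ENNReal.summable_toReal (by rw [tsum_prior hwE hwP]; simp)

lemma mixProb_ne_zero_of_append (hwE : ∑' i, wE i = 1) (hνs : ∀ i, IsMEnv (νs i))
    (hwP : ∑' j, wP j = 1) (hπs : ∀ j, IsMPolicy (πs j)) (hβ : ∀ h, β h ∈ Set.Icc (0 : ℝ) 1)
    (hstar : IsMPolicy πstar) {g l : MHist A O R}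
    (hQ : mixProb wE νs wP πs β πstar (g ++ l) ≠ 0) : mixProb wE νs wP πs β πstar g ≠ 0 :=
  fun h0 => hQ (nonpos_iff_eq_zero.1 (h0 ▸ mixProb_append_le hwE hνs hwP hπs hβ hstar g l))

noncomputable def klPrior (wE : ι → ℝ≥0∞) (νs : ι → MEnv A O R) (wP : κ → ℝ≥0∞)
    (πs : κ → MPolicy A O R) (h : MHist A O R) : ℝ :=
  relEntropy (fun q => (jointPost wE νs wP πs h q).toReal) fun q => (prior wE wP q).toReal

lemma IG_eq_relEntropy (hwE : ∑' i, wE i = 1) (hνs : ∀ i, IsMEnv (νs i))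
    (hwP : ∑' j, wP j = 1) (hπs : ∀ j, IsMPolicy (πs j)) (hβ : ∀ h, β h ∈ Set.Icc (0 : ℝ) 1)
    (hstar : IsMPolicy πstar) {g l : MHist A O R}
    (hQ : mixProb wE νs wP πs β πstar (g ++ l) ≠ 0) :
    IG wE νs wP πs g l = relEntropy (fun q => (jointPost wE νs wP πs (g ++ l) q).toReal)
      fun q => (jointPost wE νs wP πs g q).toReal := by
  have hs := (summable_abs_mul_log_div (fun _ => ENNReal.toReal_nonneg)
    (fun _ => ENNReal.toReal_nonneg) (summable_jointPost_toReal hwE hνs hwP hπs hβ hstar hQ)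
    (summable_jointPost_toReal hwE hνs hwP hπs hβ hstar
      (mixProb_ne_zero_of_append hwE hνs hwP hπs hβ hstar hQ))
    (jointPost_append_toReal_le hwE hνs hwP hπs hβ hstar hQ)).of_abs
  exact (hs.tsum_prod' hs.prod_factor).symm

lemma IG_nonneg (hwE : ∑' i, wE i = 1) (hνs : ∀ i, IsMEnv (νs i))
    (hwP : ∑' j, wP j = 1) (hπs : ∀ j, IsMPolicy (πs j)) (hβ : ∀ h, β h ∈ Set.Icc (0 : ℝ) 1)
    (hstar : IsMPolicy πstar) {g l : MHist A O R}
    (hQ : mixProb wE νs wP πs β πstar (g ++ l) ≠ 0) : 0 ≤ IG wE νs wP πs g l := by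
  have hQg := mixProb_ne_zero_of_append hwE hνs hwP hπs hβ hstar hQ
  rw [IG_eq_relEntropy hwE hνs hwP hπs hβ hstar hQ]
  refine relEntropy_nonneg (fun _ => ENNReal.toReal_nonneg) (fun _ => ENNReal.toReal_nonneg)
    (summable_jointPost_toReal hwE hνs hwP hπs hβ hstar hQ)
    (summable_jointPost_toReal hwE hνs hwP hπs hβ hstar hQg)
    (jointPost_append_toReal_le hwE hνs hwP hπs hβ hstar hQ) ?_
  rw [tsum_jointPost_toReal hwE hνs hwP hπs hβ hstar hQ,
    tsum_jointPost_toReal hwE hνs hwP hπs hβ hstar hQg]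

lemma klPrior_nonneg (hwE : ∑' i, wE i = 1) (hνs : ∀ i, IsMEnv (νs i))
    (hwP : ∑' j, wP j = 1) (hπs : ∀ j, IsMPolicy (πs j)) (hβ : ∀ h, β h ∈ Set.Icc (0 : ℝ) 1)
    (hstar : IsMPolicy πstar) {h : MHist A O R} (hQ : mixProb wE νs wP πs β πstar h ≠ 0) :
    0 ≤ klPrior wE νs wP πs h := by
  refine relEntropy_nonneg (fun _ => ENNReal.toReal_nonneg) (fun _ => ENNReal.toReal_nonneg)
    (summable_jointPost_toReal hwE hνs hwP hπs hβ hstar hQ) (summable_prior_toReal hwE hwP)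
    (jointPost_toReal_le hwE hνs hwP hπs hβ hstar hQ) ?_
  rw [tsum_jointPost_toReal hwE hνs hwP hπs hβ hstar hQ,
    ← ENNReal.tsum_toReal_eq (prior_ne_top hwE hwP), tsum_prior hwE hwP, ENNReal.toReal_one]

lemma klPrior_append_eq_IG_add (hwE : ∑' i, wE i = 1) (hνs : ∀ i, IsMEnv (νs i))
    (hwP : ∑' j, wP j = 1) (hπs : ∀ j, IsMPolicy (πs j)) (hβ : ∀ h, β h ∈ Set.Icc (0 : ℝ) 1)
    (hstar : IsMPolicy πstar) {g l : MHist A O R}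
    (hQ : mixProb wE νs wP πs β πstar (g ++ l) ≠ 0) :
    klPrior wE νs wP πs (g ++ l) = IG wE νs wP πs g l +
      ∑' q, (jointPost wE νs wP πs (g ++ l) q).toReal *
        Real.log ((jointPost wE νs wP πs g q).toReal / (prior wE wP q).toReal) := by
  rw [IG_eq_relEntropy hwE hνs hwP hπs hβ hstar hQ]
  exact relEntropy_eq_add (fun _ => ENNReal.toReal_nonneg) (fun _ => ENNReal.toReal_nonneg)
    (fun _ => ENNReal.toReal_nonneg) (summable_jointPost_toReal hwE hνs hwP hπs hβ hstar hQ)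
    (summable_jointPost_toReal hwE hνs hwP hπs hβ hstar
      (mixProb_ne_zero_of_append hwE hνs hwP hπs hβ hstar hQ))
    (summable_prior_toReal hwE hwP) (jointPost_append_toReal_le hwE hνs hwP hπs hβ hstar hQ)
    (jointPost_toReal_le hwE hνs hwP hπs hβ hstar hQ)

lemma hasSum_mixProb_mul_tsum_jointPost_mul_log (hwE : ∑' i, wE i = 1) (hνs : ∀ i, IsMEnv (νs i))
    (hwP : ∑' j, wP j = 1) (hπs : ∀ j, IsMPolicy (πs j)) (hβ : ∀ h, β h ∈ Set.Icc (0 : ℝ) 1)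
    (hstar : IsMPolicy πstar) {g : MHist A O R} (hQ : mixProb wE νs wP πs β πstar g ≠ 0)
    (n : ℕ) :
    HasSum (fun f : Fin n → MInter A O R =>
        (mixProb wE νs wP πs β πstar (g ++ List.ofFn f)).toReal *
        ∑' q, (jointPost wE νs wP πs (g ++ List.ofFn f) q).toReal *
          Real.log ((jointPost wE νs wP πs g q).toReal / (prior wE wP q).toReal))
      ((mixProb wE νs wP πs β πstar g).toReal * klPrior wE νs wP πs g) := by
  have hmart : ∀ q, HasSum (fun f : Fin n → MInter A O R =>
      (mixProb wE νs wP πs β πstar (g ++ List.ofFn f)).toReal *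
        (jointPost wE νs wP πs (g ++ List.ofFn f) q).toReal)
      ((mixProb wE νs wP πs β πstar g).toReal * (jointPost wE νs wP πs g q).toReal) := by
    intro q
    have hsum := tsum_mixProb_mul_jointPost_append hwE hνs hwP hπs hβ hstar g n q
    have h := ENNReal.hasSum_toReal (hsum ▸ ENNReal.mul_ne_top
      (mixProb_ne_top hwE hνs hwP hπs hβ hstar g) (jointPost_ne_top g q))
    rw [← ENNReal.tsum_toReal_eq fun f => ENNReal.mul_ne_top
      (mixProb_ne_top hwE hνs hwP hπs hβ hstar _) (jointPost_ne_top _ q), hsum] at h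
    simpa only [ENNReal.toReal_mul] using h
  have habs := summable_abs_mul_log_div (fun _ => ENNReal.toReal_nonneg)
    (fun _ => ENNReal.toReal_nonneg) (summable_jointPost_toReal hwE hνs hwP hπs hβ hstar hQ)
    (summable_prior_toReal hwE hwP) (jointPost_toReal_le hwE hνs hwP hπs hβ hstar hQ)
  have h := hasSum_mul_tsum_of_hasSum
    (φ := fun q => Real.log ((jointPost wE νs wP πs g q).toReal / (prior wE wP q).toReal))
    (fun _ => ENNReal.toReal_nonneg)
    (fun _ _ => ENNReal.toReal_nonneg) hmart
    ((habs.mul_left (mixProb wE νs wP πs β πstar g).toReal).congr fun q => by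
      rw [abs_mul, abs_of_nonneg ENNReal.toReal_nonneg, mul_assoc])
  rwa [klPrior, relEntropy, ← tsum_mul_left, ← tsum_congr fun q => mul_assoc _ _ _]

/-- The chain rule for relative entropy, averaged over the next `n` interactions. -/
lemma mixProb_mul_klPrior_add_tsum_le (hwE : ∑' i, wE i = 1) (hνs : ∀ i, IsMEnv (νs i))
    (hwP : ∑' j, wP j = 1) (hπs : ∀ j, IsMPolicy (πs j)) (hβ : ∀ h, β h ∈ Set.Icc (0 : ℝ) 1)
    (hstar : IsMPolicy πstar) (g : MHist A O R) (n : ℕ) :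
    mixProb wE νs wP πs β πstar g * ENNReal.ofReal (klPrior wE νs wP πs g) +
        ∑' f : Fin n → MInter A O R, mixProb wE νs wP πs β πstar (g ++ List.ofFn f) *
          ENNReal.ofReal (IG wE νs wP πs g (List.ofFn f))
      ≤ ∑' f : Fin n → MInter A O R, mixProb wE νs wP πs β πstar (g ++ List.ofFn f) *
          ENNReal.ofReal (klPrior wE νs wP πs (g ++ List.ofFn f)) := by
  by_cases hQ : mixProb wE νs wP πs β πstar g = 0
  · have hQf : ∀ f : Fin n → MInter A O R, mixProb wE νs wP πs β πstar (g ++ List.ofFn f) = 0 :=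
      fun f => nonpos_iff_eq_zero.1 (hQ ▸ mixProb_append_le hwE hνs hwP hπs hβ hstar g _)
    simp [hQ, hQf]
  have hofReal : ∀ h x, mixProb wE νs wP πs β πstar h * ENNReal.ofReal x
      = ENNReal.ofReal ((mixProb wE νs wP πs β πstar h).toReal * x) := fun h x => by
    rw [ENNReal.ofReal_mul ENNReal.toReal_nonneg,
      ENNReal.ofReal_toReal (mixProb_ne_top hwE hνs hwP hπs hβ hstar h)]
  simp only [hofReal]
  refine ofReal_add_tsum_ofReal_le (fun f => ?_) (fun f => ?_) (fun f => ?_)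
    (hasSum_mixProb_mul_tsum_jointPost_mul_log hwE hνs hwP hπs hβ hstar hQ n)
    (mul_nonneg ENNReal.toReal_nonneg (klPrior_nonneg hwE hνs hwP hπs hβ hstar hQ))
  all_goals obtain hQf | hQf := eq_or_ne (mixProb wE νs wP πs β πstar (g ++ List.ofFn f)) 0
  · simp [hQf]
  · exact mul_nonneg ENNReal.toReal_nonneg (IG_nonneg hwE hνs hwP hπs hβ hstar hQf)
  · simp [hQf]
  · exact mul_nonneg ENNReal.toReal_nonneg (klPrior_nonneg hwE hνs hwP hπs hβ hstar hQf)
  · simp [hQf]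
  · rw [klPrior_append_eq_IG_add hwE hνs hwP hπs hβ hstar hQf, mul_add]

lemma mixProb_mul_ofReal_klPrior_le (hwE : ∑' i, wE i = 1) (hνs : ∀ i, IsMEnv (νs i))
    (hwP : ∑' j, wP j = 1) (hπs : ∀ j, IsMPolicy (πs j)) (hβ : ∀ h, β h ∈ Set.Icc (0 : ℝ) 1)
    (hstar : IsMPolicy πstar) (h : MHist A O R) :
    mixProb wE νs wP πs β πstar h * ENNReal.ofReal (klPrior wE νs wP πs h)
      ≤ ∑' q, prior wE wP q * hypProb νs πs β πstar q h *
          ENNReal.ofReal (Real.log (1 / (prior wE wP q).toReal)) := by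
  rcases eq_or_ne (mixProb wE νs wP πs β πstar h) 0 with hQ | hQ
  · simp [hQ]
  calc mixProb wE νs wP πs β πstar h * ENNReal.ofReal (klPrior wE νs wP πs h)
      ≤ mixProb wE νs wP πs β πstar h * ∑' q, ENNReal.ofReal
          ((jointPost wE νs wP πs h q).toReal * Real.log (1 / (prior wE wP q).toReal)) :=
        mul_le_mul_right (ofReal_relEntropy_le (fun _ => ENNReal.toReal_nonneg)
          (jointPost_toReal_le_one h) (fun _ => ENNReal.toReal_nonneg)
          (prior_toReal_le_one hwE hwP)
          (summable_jointPost_toReal hwE hνs hwP hπs hβ hstar hQ)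
          (summable_prior_toReal hwE hwP) (jointPost_toReal_le hwE hνs hwP hπs hβ hstar hQ)) _
    _ = _ := by
      rw [← ENNReal.tsum_mul_left]
      refine tsum_congr fun q => ?_
      rw [ENNReal.ofReal_mul ENNReal.toReal_nonneg, ENNReal.ofReal_toReal (jointPost_ne_top h q),
        ← mul_assoc, prior_mul_hypProb hwE hνs hwP hπs]

noncomputable def expectedKLPrior (wE : ι → ℝ≥0∞) (νs : ι → MEnv A O R) (wP : κ → ℝ≥0∞)
    (πs : κ → MPolicy A O R) (β : MHist A O R → ℝ) (πstar : MPolicy A O R) (T : ℕ) : ℝ≥0∞ :=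
  ∑' v : Fin T → MInter A O R, mixProb wE νs wP πs β πstar (List.ofFn v) *
    ENNReal.ofReal (klPrior wE νs wP πs (List.ofFn v))

noncomputable def expectedIG (wE : ι → ℝ≥0∞) (νs : ι → MEnv A O R) (wP : κ → ℝ≥0∞)
    (πs : κ → MPolicy A O R) (β : MHist A O R → ℝ) (πstar : MPolicy A O R) (t m : ℕ) :
    ℝ≥0∞ :=
  ∑' (g : Fin t → MInter A O R) (f : Fin m → MInter A O R),
    mixProb wE νs wP πs β πstar (List.ofFn g ++ List.ofFn f) *
      ENNReal.ofReal (IG wE νs wP πs (List.ofFn g) (List.ofFn f))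

lemma expectedKLPrior_add_expectedIG_le (hwE : ∑' i, wE i = 1) (hνs : ∀ i, IsMEnv (νs i))
    (hwP : ∑' j, wP j = 1) (hπs : ∀ j, IsMPolicy (πs j)) (hβ : ∀ h, β h ∈ Set.Icc (0 : ℝ) 1)
    (hstar : IsMPolicy πstar) (t m : ℕ) :
    expectedKLPrior wE νs wP πs β πstar t + expectedIG wE νs wP πs β πstar t m
      ≤ expectedKLPrior wE νs wP πs β πstar (t + m) := by
  have hofFn : ∀ (g : Fin t → MInter A O R) (f : Fin m → MInter A O R),
      List.ofFn (Fin.appendEquiv t m (g, f)) = List.ofFn g ++ List.ofFn f :=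
    fun g f => List.ofFn_fin_append g f
  rw [expectedKLPrior, expectedIG, expectedKLPrior, ← (Fin.appendEquiv t m).tsum_eq,
    ENNReal.tsum_prod', ← ENNReal.tsum_add]
  simp only [hofFn]
  exact ENNReal.tsum_le_tsum fun g =>
    mixProb_mul_klPrior_add_tsum_le hwE hνs hwP hπs hβ hstar (List.ofFn g) m

lemma expectedKLPrior_le_priorEnt (hwE : ∑' i, wE i = 1) (hνs : ∀ i, IsMEnv (νs i))
    (hwP : ∑' j, wP j = 1) (hπs : ∀ j, IsMPolicy (πs j)) (hβ : ∀ h, β h ∈ Set.Icc (0 : ℝ) 1)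
    (hstar : IsMPolicy πstar) (hent : FiniteEntropy wE wP) (T : ℕ) :
    expectedKLPrior wE νs wP πs β πstar T ≤ ENNReal.ofReal (priorEnt wE wP) := by
  have hnn : ∀ q, 0 ≤ (prior wE wP q).toReal * Real.log (1 / (prior wE wP q).toReal) :=
    fun q => mul_nonneg ENNReal.toReal_nonneg
      (log_one_div_nonneg ENNReal.toReal_nonneg (prior_toReal_le_one hwE hwP q))
  calc expectedKLPrior wE νs wP πs β πstar T
      ≤ ∑' (v : Fin T → MInter A O R) (q : ι × κ), prior wE wP q *
          hypProb νs πs β πstar q (List.ofFn v) *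
          ENNReal.ofReal (Real.log (1 / (prior wE wP q).toReal)) :=
        ENNReal.tsum_le_tsum fun v =>
          mixProb_mul_ofReal_klPrior_le hwE hνs hwP hπs hβ hstar (List.ofFn v)
    _ = ∑' q, ENNReal.ofReal ((prior wE wP q).toReal * Real.log (1 / (prior wE wP q).toReal)) := by
        rw [ENNReal.tsum_comm]
        refine tsum_congr fun q => ?_
        rw [ENNReal.tsum_mul_right, ENNReal.tsum_mul_left, tsum_hypProb hνs hπs hβ hstar,
          mul_one, ENNReal.ofReal_mul ENNReal.toReal_nonneg,
          ENNReal.ofReal_toReal (prior_ne_top hwE hwP q)]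
    _ = ENNReal.ofReal (priorEnt wE wP) := by
        rw [← ENNReal.ofReal_tsum_of_nonneg hnn hent, priorEnt]
        exact congrArg _ (hent.tsum_prod' hent.prod_factor)

end BayesMixture

lemma preimage_restrict_eq_mcyl (T : ℕ) (v : Fin T → MInter A O R) :
    (fun ω : MInf A O R => fun k : Fin T => ω k) ⁻¹' {v} = mcyl (List.ofFn v) := by
  ext ω
  simp [mcyl, funext_iff, Fin.forall_iff]

lemma lintegral_IG_le_expectedIG [Countable A] [Countable O] [Countable R] [MeasurableSpace A]
    [MeasurableSpace O] [MeasurableSpace R] {wE : ι → ℝ≥0∞} {wP : κ → ℝ≥0∞}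
    {νs : ι → MEnv A O R} {πs : κ → MPolicy A O R} {β : MHist A O R → ℝ}
    {πstar : MPolicy A O R} {P : Measure (MInf A O R)}
    (hP : IsMInduced P β (pibar wP πs) πstar (xi wE νs)) (t m : ℕ) :
    ∫⁻ ω, ENNReal.ofReal (IG wE νs wP πs (mhist ω t) (List.ofFn fun k : Fin m => ω (t + k.1))) ∂P
      ≤ expectedIG wE νs wP πs β πstar t m := by
  have hfibre : ∀ p, (fun ω : MInf A O R => (Fin.appendEquiv t m).symm fun k => ω k) ⁻¹' {p}
      = mcyl (List.ofFn p.1 ++ List.ofFn p.2) := fun p => by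
    rw [← List.ofFn_fin_append, ← preimage_restrict_eq_mcyl]
    ext ω
    exact (Fin.appendEquiv t m).symm_apply_eq
  refine (lintegral_comp_le_tsum P (fun ω => (Fin.appendEquiv t m).symm fun k => ω k)
    fun p => ENNReal.ofReal (IG wE νs wP πs (List.ofFn p.1) (List.ofFn p.2))).trans_eq ?_
  rw [expectedIG, ENNReal.tsum_prod']
  exact tsum_congr fun g => tsum_congr fun f => by rw [hfibre, hP.2, mul_comm]; rfl

theorem cumulative_information_gain_le_entropy_general
    {A O R ι κ : Type} [Fintype A] [Fintype O] [Countable R]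
    [MeasurableSpace A] [MeasurableSpace O] [MeasurableSpace R]
    (wE : ι → ℝ≥0∞) (wP : κ → ℝ≥0∞) (hwE : ∑' i : ι, wE i = 1) (hwP : ∑' j : κ, wP j = 1)
    (νs : ι → MEnv A O R) (hνs : ∀ i, IsMEnv (νs i))
    (πs : κ → MPolicy A O R) (hπs : ∀ j, IsMPolicy (πs j))
    (hent : FiniteEntropy wE wP)
    (β : MHist A O R → ℝ) (hβ : ∀ h, β h ∈ Set.Icc (0:ℝ) 1)
    (πstar : MPolicy A O R) (hstar0 : IsMPolicy πstar)
    (P : Measure (MInf A O R))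
    (hP : IsMInduced P β (pibar wP πs) πstar (xi wE νs))
    (m : ℕ) (i : ℕ) :
    ∑' n : ℕ, ∫⁻ ω, ENNReal.ofReal
        (IG wE νs wP πs (mhist ω (m * n + i))
          (List.ofFn fun k : Fin m => ω (m * n + i + k.1))) ∂P
      ≤ ENNReal.ofReal (priorEnt wE wP) :=
  (ENNReal.tsum_le_tsum fun n => lintegral_IG_le_expectedIG hP (m * n + i) m).trans <|
    tsum_le_of_add_le_succ
      (fun n => (expectedKLPrior_add_expectedIG_le hwE hνs hwP hπs hβ hstar0 _ m).trans_eq <| by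
        rw [Nat.mul_succ, Nat.add_right_comm])
      fun _ => expectedKLPrior_le_priorEnt hwE hνs hwP hπs hβ hstar0 hent _

/-- **Cumulative information gain is bounded by prior entropy.** Under the measure in
which explore-step actions follow the mixture `π̄`, exploit-step actions follow an
arbitrary policy `π^*`, and percepts follow the mixture `ξ`, the expected total
information gain over disjoint blocks of length `m` at offset `i < m` is at most the
entropy of the prior. -/
theorem cumulative_information_gain_le_entropy
    {A O R ι κ : Type} [Fintype A] [Fintype O] [Countable R] [Countable ι] [Countable κ]
    [MeasurableSpace A] [MeasurableSpace O] [MeasurableSpace R]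
    (wE : ι → ℝ≥0∞) (wP : κ → ℝ≥0∞) (hwE : ∑' i : ι, wE i = 1) (hwP : ∑' j : κ, wP j = 1)
    (νs : ι → MEnv A O R) (hνs : ∀ i, IsMEnv (νs i))
    (πs : κ → MPolicy A O R) (hπs : ∀ j, IsMPolicy (πs j))
    (iμ : ι) (hiμ : wE iμ ≠ 0) (jh : κ) (hjh : wP jh ≠ 0)
    (hent : FiniteEntropy wE wP)
    (β : MHist A O R → ℝ) (hβ : ∀ h, β h ∈ Set.Icc (0:ℝ) 1)
    (πstar : MPolicy A O R) (hstar0 : IsMPolicy πstar)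
    (P : Measure (MInf A O R))
    (hP : IsMInduced P β (pibar wP πs) πstar (xi wE νs))
    (m : ℕ) (hm : 0 < m) (i : ℕ) (hi : i < m) :
    ∑' n : ℕ, ∫⁻ ω, ENNReal.ofReal
        (IG wE νs wP πs (mhist ω (m * n + i))
          (List.ofFn fun k : Fin m => ω (m * n + i + k.1))) ∂P
      ≤ ENNReal.ofReal (priorEnt wE wP) :=
  cumulative_information_gain_le_entropy_general wE wP hwE hwP νs hνs πs hπs hent β hβ πstar hstar0
    P hP m i

end Mentee
end

section
/- Bayes-optimal exploration is initially worthwhile: In the environment class {ν_i : i ∈ ℕ ∪ {∞}} with prior w(ν_∞) = 1/2 and w(ν_i) = 1/(2(i+1)(i+2)) for i ∈ ℕ, and discount factor γ = 0.9, the policy π_{{0}} (take action 1 at t = 0; if a reward of 1 is ever received always take action 1 thereafter, otherwise take action 0) has Bayes value ∑_{i ∈ ℕ∪{∞}} w(ν_i)·V^{π_{{0}}}_{ν_i} = w(ν_0)·1 + (1 − w(ν_0))·(1−γ)·∑_{t=1}^∞ γ^t·0.5 = 0.25 + 0.75·0.9·0.5 = 0.5875, which strictly exceeds the Bayes value 0.5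 = ∑_{i ∈ ℕ∪{∞}} w(ν_i)·V^{π_∅}_{ν_i} of the never-exploring policy π_∅ (always take action 0). -/
/-!
Never exploring earns `1/2` at every step in every environment. Exploring once at time `0`
earns `1` forever in `ν_0` and, in every other environment, `0` at time `0` and `1/2`
afterwards, so its value there is `γ/2`. The prior has total mass `1` because
`1/(2(i+1)(i+2)) = 1/(2(i+1)) - 1/(2(i+2))` telescopes to `1/2` over `ℕ`. Hence the Bayes
values are `1/2` and `w(ν_0) + (1 - w(ν_0)) γ/2 = 1/4 + 3/4 · 0.45`.
-/

open scoped Classical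

namespace BayesExplore

/-- In environment `ν_i` (where `i = some j` for `j ∈ ℕ` and `i = none` stands for `ν_∞`),
the arm `1` is "active" at time `s` iff `i = some j` with `j ≤ s` (action 1 then pays 1). -/
def active (i : Option ℕ) (s : ℕ) : Prop := ∃ j : ℕ, i = some j ∧ j ≤ s

/-- The reward received at time `t` by the policy `π_S` (take action 1 at times in `S`,
take action 1 forever after ever receiving reward 1, otherwise take action 0) in the
deterministic environment `ν_i`: action 0 yields `1/2`; action 1 yields `1` if `t ≥ i`
and `0` otherwise. -/
noncomputable def rew (S : Set ℕ) (i : Option ℕ) (t : ℕ) : ℝ :=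
  if ∃ s ∈ S, s < t ∧ active i s then 1
  else if t ∈ S then (if active i t then 1 else 0)
  else 1 / 2

/-- Discounted value from time `n`: `V = (1-γ) ∑_{k≥0} γ^k r_{n+k}`. -/
noncomputable def valS (γ : ℝ) (S : Set ℕ) (i : Option ℕ) (n : ℕ) : ℝ :=
  (1 - γ) * ∑' k : ℕ, γ ^ k * rew S i (n + k)

/-- The prior: `w(ν_∞) = 1/2` and `w(ν_i) = 1/(2(i+1)(i+2))`. -/
noncomputable def w0 : Option ℕ → ℝ
  | none => 1 / 2
  | some i => 1 / (2 * ((i : ℝ) + 1) * ((i : ℝ) + 2))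

/-- The Bayes value of the policy `π_S` from the start. -/
noncomputable def bayesVal (γ : ℝ) (S : Set ℕ) : ℝ :=
  ∑' i : Option ℕ, w0 i * valS γ S i 0

open Filter Topology

theorem hasSum_option {α β : Type*} [AddCommMonoid α] [TopologicalSpace α] [ContinuousAdd α]
    {f : Option β → α} {a : α} (h : HasSum (fun b => f (some b)) a) : HasSum f (f none + a) := by
  have hsome : HasSum (fun o => if o = none then 0 else f o) a := by
    rw [← (Option.some_injective β).hasSum_iff (by rintro (_ | b) hb <;> simp_all)]
    simpa [Function.comp_def] using h
  convert (hasSum_ite_eq none (f none)).add hsome using 1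
  funext o
  cases o <;> simp

theorem hasSum_sub_succ_of_antitone {f : ℕ → ℝ} {l : ℝ} (hf : Antitone f)
    (hl : Tendsto f atTop (𝓝 l)) : HasSum (fun n => f n - f (n + 1)) (f 0 - l) := by
  rw [hasSum_iff_tendsto_nat_of_nonneg (fun n => sub_nonneg.2 (hf n.le_succ))]
  simp_rw [Finset.sum_range_sub']
  exact tendsto_const_nhds.sub hl

theorem hasSum_w0 : HasSum w0 1 := by
  let g : ℕ → ℝ := fun j => 1 / 2 * (1 / ((j : ℝ) + 1))
  have hg : Antitone g := fun m n hmn => by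
    simp only [g]
    gcongr
  have hg0 : Tendsto g atTop (𝓝 0) := by
    simpa only [mul_zero] using
      (tendsto_one_div_add_atTop_nhds_zero_nat (𝕜 := ℝ)).const_mul (1 / 2 : ℝ)
  have hsome : HasSum (fun j => w0 (some j)) (1 / 2) := by
    convert hasSum_sub_succ_of_antitone hg hg0 using 1
    · funext j
      simp only [w0, g]
      push_cast
      field_simp
      ring
    · norm_num [g]
  convert hasSum_option hsome using 1
  norm_num [w0]

theorem w0_some_zero : w0 (some 0) = 1 / 4 := by
  norm_num [w0]

theorem active_some_zero (s : ℕ) : active (some 0) s := ⟨0, rfl, s.zero_le⟩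

theorem not_active_zero {i : Option ℕ} (h : i ≠ some 0) : ¬ active i 0 := by
  rintro ⟨j, rfl, hj⟩
  exact h (by rw [Nat.le_zero.mp hj])

theorem rew_empty (i : Option ℕ) (t : ℕ) : rew ∅ i t = 1 / 2 := by
  simp [rew]

theorem rew_singleton_zero_some_zero (t : ℕ) : rew {0} (some 0) t = 1 := by
  rcases t.eq_zero_or_pos with rfl | ht
  · simp [rew, active_some_zero]
  · rw [rew, if_pos ⟨0, rfl, ht, active_some_zero 0⟩]

theorem rew_singleton_zero_of_ne {i : Option ℕ} (h : i ≠ some 0) (t : ℕ) :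
    rew {0} i t = if t = 0 then 0 else 1 / 2 := by
  rcases eq_or_ne t 0 with rfl | ht
  · simp [rew, not_active_zero h]
  · simp [rew, ht, not_active_zero h]

theorem discounted_const {γ : ℝ} (hγ₀ : 0 ≤ γ) (hγ₁ : γ < 1) (c : ℝ) :
    (1 - γ) * ∑' k : ℕ, γ ^ k * c = c := by
  rw [tsum_mul_right, tsum_geometric_of_lt_one hγ₀ hγ₁]
  field_simp [(sub_pos.2 hγ₁).ne']

theorem discounted_shift_const {γ : ℝ} (hγ₀ : 0 ≤ γ) (hγ₁ : γ < 1) (c : ℝ) :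
    (1 - γ) * ∑' k : ℕ, γ ^ (k + 1) * c = γ * c := by
  simp_rw [pow_succ, mul_comm _ γ, mul_assoc, tsum_mul_left]
  rw [mul_left_comm, discounted_const hγ₀ hγ₁]

theorem valS_of_rew_eq_const {γ c : ℝ} (hγ₀ : 0 ≤ γ) (hγ₁ : γ < 1) {S : Set ℕ} {i : Option ℕ}
    (h : ∀ t, rew S i t = c) (n : ℕ) : valS γ S i n = c := by
  simp only [valS, h]
  exact discounted_const hγ₀ hγ₁ c

theorem valS_singleton_zero_of_ne {γ : ℝ} (hγ₀ : 0 ≤ γ) (hγ₁ : γ < 1) {i : Option ℕ}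
    (h : i ≠ some 0) : valS γ {0} i 0 = γ / 2 := by
  have htail : Summable fun k : ℕ => γ ^ (k + 1) * (1 / 2 : ℝ) :=
    ((summable_geometric_of_lt_one hγ₀ hγ₁).mul_right _).comp_injective (add_left_injective 1)
  have hsum : Summable fun k => γ ^ k * rew {0} i (0 + k) := by
    rw [← summable_nat_add_iff 1]
    simpa [rew_singleton_zero_of_ne h] using htail
  rw [valS, hsum.tsum_eq_zero_add]
  simp only [rew_singleton_zero_of_ne h, zero_add, Nat.add_one_ne_zero, if_false, if_true,
    mul_zero]
  rw [discounted_shift_const hγ₀ hγ₁]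
  ring

theorem bayesVal_empty {γ : ℝ} (hγ₀ : 0 ≤ γ) (hγ₁ : γ < 1) : bayesVal γ ∅ = 1 / 2 := by
  simp only [bayesVal, valS_of_rew_eq_const hγ₀ hγ₁ (rew_empty _)]
  rw [hasSum_w0.mul_right (1 / 2) |>.tsum_eq, one_mul]

theorem bayesVal_singleton_zero {γ : ℝ} (hγ₀ : 0 ≤ γ) (hγ₁ : γ < 1) :
    bayesVal γ {0} = w0 (some 0) + (1 - w0 (some 0)) * (γ / 2) := by
  have hterm : ∀ i, w0 i * valS γ {0} i 0
      = w0 i * (γ / 2) + if i = some 0 then w0 (some 0) * (1 - γ / 2) else 0 := by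
    intro i
    by_cases hi : i = some 0
    · subst hi
      rw [valS_of_rew_eq_const hγ₀ hγ₁ rew_singleton_zero_some_zero, if_pos rfl]
      ring
    · rw [valS_singleton_zero_of_ne hγ₀ hγ₁ hi, if_neg hi, add_zero]
  rw [bayesVal, funext hterm,
    ((hasSum_w0.mul_right _).add (hasSum_ite_eq _ _)).tsum_eq]
  ring

/-- **Bayes-optimal exploration is initially worthwhile.** With discount `γ = 0.9`, the
Bayes value of the exploring policy `π_{{0}}` equals
`w(ν_0)·1 + (1 − w(ν_0))·(1−γ)·∑_{t≥1} γ^t·0.5 = 0.5875`, which strictly exceeds the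
Bayes value `0.5` of the never-exploring policy `π_∅`. -/
theorem exploring_initially_worthwhile :
    bayesVal 0.9 {0}
      = w0 (some 0) * 1
        + (1 - w0 (some 0)) * ((1 - 0.9) * ∑' t : ℕ, (0.9 : ℝ) ^ (t + 1) * 0.5) ∧
    bayesVal 0.9 {0} = 0.5875 ∧
    bayesVal 0.9 ∅ = 0.5 ∧
    bayesVal 0.9 ∅ < bayesVal 0.9 {0} := by
  have hγ₀ : (0 : ℝ) ≤ 0.9 := by norm_num
  have hγ₁ : (0.9 : ℝ) < 1 := by norm_num
  have hexplore : bayesVal 0.9 {0} = 0.5875 := by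
    rw [bayesVal_singleton_zero hγ₀ hγ₁, w0_some_zero]
    norm_num
  have hnever : bayesVal 0.9 ∅ = 0.5 := by
    rw [bayesVal_empty hγ₀ hγ₁]
    norm_num
  refine ⟨?_, hexplore, hnever, by rw [hexplore, hnever]; norm_num⟩
  rw [hexplore, discounted_shift_const hγ₀ hγ₁, w0_some_zero]
  norm_num

end BayesExplore
end
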